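/- Suppose μ(a₁) ≥ 1, let t¹ be the first time step with π(t¹) = a₁, let r be any ranking reported by a₁, and let y₁ be the item picked at step t¹ when a₁ reports r. Let π' be the picking sequence of length m−1 obtained from π by deleting its t¹-th entry, and let r' be the ranking obtained from r by moving y₁ to the last position. Denote by S_t (resp. S'_t) the set of items picked after the first t steps of the allocation process with picking sequence π and report r (resp. picking sequence π' and report r'). Then S'_t = S_t for all t < t¹, and S'_t ⊆ S_{t+1} for all t with t¹ ≤ t ≤ m−1. -/

import Mathlib

/-- One step of the sequential allocation process: an agent with ranking `rk`
(a bijection `Fin m ≃ Fin m`, lower rank = more preferred) greedily picks the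
lowest-rank item among the remaining ones (the complement of the already
picked set `S`); if nothing is left, nothing happens. -/
def pickStep {m : ℕ} (rk : Fin m ≃ Fin m) (S : Finset (Fin m)) : Finset (Fin m) :=
  S ∪ Sᶜ.filter fun i => ∀ j ∈ Sᶜ, rk i ≤ rk j

/-- `pickedSeq rpt π` : the set of items picked after running the sequential
allocation process along the (finite) picking sequence `π`, where agent `a`
reports the ranking `rpt a`.  The set picked after the first `t` steps is
`pickedSeq rpt (π.take t)`. -/
def pickedSeq {A : Type*} {m : ℕ} (rpt : A → Fin m ≃ Fin m) (π : List A) :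
    Finset (Fin m) :=
  π.foldl (fun S a => pickStep (rpt a) S) ∅

lemma pickStep_spec {m : ℕ} (e : Fin m ≃ Fin m) (S : Finset (Fin m)) :
    (S = Finset.univ ∧ pickStep e S = S) ∨
      ∃ x, x ∉ S ∧ (∀ j ∈ Sᶜ, e x ≤ e j) ∧ pickStep e S = insert x S := by
  by_cases h : Sᶜ = ∅
  · left
    refine ⟨by simpa using h, ?_⟩
    unfold pickStep
    rw [h]
    simp
  · right
    obtain ⟨x, hxS, hmin⟩ := Finset.exists_min_image Sᶜ e (Finset.nonempty_iff_ne_empty.mpr h)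
    refine ⟨x, by simpa using hxS, hmin, ?_⟩
    unfold pickStep
    have hfil : Sᶜ.filter (fun i => ∀ j ∈ Sᶜ, e i ≤ e j) = {x} := by
      ext i
      simp only [Finset.mem_filter, Finset.mem_singleton]
      constructor
      · rintro ⟨hi, hmin'⟩
        exact e.injective (le_antisymm (hmin' x hxS) (hmin i hi))
      · rintro rfl
        exact ⟨hxS, hmin⟩
    rw [hfil, Finset.union_comm, ← Finset.insert_eq]

lemma subset_pickStep {m : ℕ} (e : Fin m ≃ Fin m) (S : Finset (Fin m)) :
    S ⊆ pickStep e S := Finset.subset_union_left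

lemma card_pickStep_le {m : ℕ} (e : Fin m ≃ Fin m) (S : Finset (Fin m)) :
    (pickStep e S).card ≤ S.card + 1 := by
  rcases pickStep_spec e S with ⟨_, h⟩ | ⟨x, _, _, h⟩
  · rw [h]; omega
  · rw [h]; exact Finset.card_insert_le _ _

lemma step_lemma {m : ℕ} (e e' : Fin m ≃ Fin m) (y₁ : Fin m) (S T : Finset (Fin m))
    (hST : S ⊆ T) (hcard : T.card ≤ S.card + 1) (hy : y₁ ∈ T)
    (hcomp : ∀ i i', i ≠ y₁ → i' ≠ y₁ → (e' i ≤ e' i' ↔ e i ≤ e i')) :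
    pickStep e' S ⊆ pickStep e T ∧ (pickStep e T).card ≤ (pickStep e' S).card + 1 := by
  rcases pickStep_spec e' S with ⟨hSu, hS⟩ | ⟨x, hxS, hxmin, hS⟩
  · -- S = univ, hence T = univ
    have hTu : T = Finset.univ := Finset.univ_subset_iff.mp (hSu ▸ hST)
    have hT : pickStep e T = T := by
      rcases pickStep_spec e T with ⟨_, h⟩ | ⟨z, hzT, _, _⟩
      · exact h
      · exact absurd (hTu ▸ Finset.mem_univ z) hzT
    rw [hS, hT, hSu, hTu]
    exact ⟨le_refl _, by omega⟩
  · have hxcard : (insert x S).card = S.card + 1 := Finset.card_insert_of_notMem hxS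
    rcases pickStep_spec e T with ⟨hTu, hT⟩ | ⟨z, hzT, hzmin, hT⟩
    · rw [hS, hT]
      refine ⟨hTu ▸ Finset.subset_univ _, ?_⟩
      have := Finset.card_le_card (hS ▸ subset_pickStep e' S)
      have h2 : T.card ≤ (insert x S).card := by omega
      omega
    · rw [hS, hT]
      have hzcard : (insert z T).card = T.card + 1 := Finset.card_insert_of_notMem hzT
      refine ⟨?_, by omega⟩
      intro i hi
      rcases Finset.mem_insert.mp hi with rfl | hiS
      · -- i = x
        by_cases hxT : i ∈ T
        · exact Finset.mem_insert_of_mem hxT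
        · -- i ∉ T : show i = z
          have hxy : i ≠ y₁ := fun h => hxT (h ▸ hy)
          have hzy : z ≠ y₁ := fun h => hzT (h ▸ hy)
          have hzS : z ∈ Sᶜ := Finset.mem_compl.mpr fun h => hzT (hST h)
          have h1 : e' i ≤ e' z := hxmin z hzS
          have h2 : e z ≤ e i := hzmin i (Finset.mem_compl.mpr hxT)
          have hxz : i = z := e.injective (le_antisymm ((hcomp i z hxy hzy).mp h1) h2)
          exact hxz ▸ Finset.mem_insert_self _ _
      · exact Finset.mem_insert_of_mem (hST hiS)

lemma pickedSeq_congr {A : Type*} {m : ℕ} (rpt rpt' : A → Fin m ≃ Fin m) (l : List A)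
    (h : ∀ a ∈ l, rpt a = rpt' a) : pickedSeq rpt l = pickedSeq rpt' l := by
  suffices H : ∀ (l : List A), (∀ a ∈ l, rpt a = rpt' a) → ∀ S : Finset (Fin m),
      List.foldl (fun S a => pickStep (rpt a) S) S l
        = List.foldl (fun S a => pickStep (rpt' a) S) S l by
    exact H l h ∅
  intro l
  induction l with
  | nil => intro _ S; rfl
  | cons a l ih =>
      intro h S
      simp only [List.foldl_cons]
      rw [h a (by simp)]
      exact ih (fun b hb => h b (by simp [hb])) _

lemma pickedSeq_take_succ {A : Type*} {m : ℕ} (rpt : A → Fin m ≃ Fin m) (l : List A)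
    (t : ℕ) (ht : t < l.length) :
    pickedSeq rpt (l.take (t + 1)) = pickStep (rpt l[t]) (pickedSeq rpt (l.take t)) := by
  unfold pickedSeq
  rw [List.take_succ, List.getElem?_eq_getElem ht]
  rw [List.foldl_append]
  rfl

/-- suppose the manipulator `a₁` picks at least once; with `j` the
(0-indexed) position of the first occurrence of `a₁` in `π` (so `t¹ = j + 1` is
the first time step at which `a₁` picks), let `r` be any ranking reported by
`a₁`, and `y₁` the item picked at step `t¹` (i.e. `y₁ ∈ S_{j+1} ∖ S_j`).
Let `π' = π.eraseIdx j` be the sequence with the `t¹`-th entry deleted, and `r'`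
the ranking obtained from `r` by moving `y₁` to the last position (characterized
by: every other item is ranked before `y₁` in `r'`, and `r'` orders all other
items as `r` does).  Writing `S_t` (resp. `S'_t`) for the set of items picked
after `t` steps under `(π, r)` (resp. `(π', r')`), non-manipulators truthful:
`S'_t = S_t` for all `t < t¹`, and `S'_t ⊆ S_{t+1}` for `t¹ ≤ t ≤ m − 1`. -/
theorem statement16 {A : Type*} [DecidableEq A] {m : ℕ} (a₁ : A)
    (rk : A → Fin m ≃ Fin m) (π : List A) (hπ : π.length = m)
    (j : ℕ) (hj : π[j]? = some a₁) (hjfirst : ∀ s < j, π[s]? ≠ some a₁)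
    (r : Fin m ≃ Fin m) (y₁ : Fin m)
    (hy₁ : y₁ ∈ pickedSeq (Function.update rk a₁ r) (π.take (j + 1)))
    (hy₂ : y₁ ∉ pickedSeq (Function.update rk a₁ r) (π.take j))
    (r' : Fin m ≃ Fin m)
    (hr'last : ∀ i, i ≠ y₁ → r' i < r' y₁)
    (hr'agree : ∀ i i', i ≠ y₁ → i' ≠ y₁ → (r' i < r' i' ↔ r i < r i')) :
    (∀ t ≤ j,
        pickedSeq (Function.update rk a₁ r') ((π.eraseIdx j).take t)
          = pickedSeq (Function.update rk a₁ r) (π.take t)) ∧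
    (∀ t, j + 1 ≤ t → t ≤ m - 1 →
        pickedSeq (Function.update rk a₁ r') ((π.eraseIdx j).take t)
          ⊆ pickedSeq (Function.update rk a₁ r) (π.take (t + 1))) := by
  set rpt := Function.update rk a₁ r with hrpt
  set rpt' := Function.update rk a₁ r' with hrpt'
  have hjlen : j < π.length := by
    by_contra h
    rw [List.getElem?_eq_none (by omega)] at hj
    exact Option.some_ne_none a₁ hj.symm
  -- the ≤-version of hr'agree
  have hagree_le : ∀ i i', i ≠ y₁ → i' ≠ y₁ → (r' i ≤ r' i' ↔ r i ≤ r i') := by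
    intro i i' hi hi'
    rcases eq_or_ne i i' with rfl | hne
    · simp
    · have h1 : r' i ≠ r' i' := fun h => hne (r'.injective h)
      have h2 : r i ≠ r i' := fun h => hne (r.injective h)
      rw [le_iff_lt_or_eq, le_iff_lt_or_eq]
      simp only [h1, h2, or_false]
      exact hr'agree i i' hi hi'
  -- comparison hypothesis for any agent
  have hcomp : ∀ a : A, ∀ i i', i ≠ y₁ → i' ≠ y₁ → (rpt' a i ≤ rpt' a i' ↔ rpt a i ≤ rpt a i') := by
    intro a i i' hi hi'
    by_cases ha : a = a₁
    · subst ha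
      rw [hrpt, hrpt', Function.update_self, Function.update_self]
      exact hagree_le i i' hi hi'
    · rw [hrpt, hrpt', Function.update_of_ne ha, Function.update_of_ne ha]
  -- lists agree before j
  have htake_eq : ∀ t ≤ j, (π.eraseIdx j).take t = π.take t := by
    intro t ht
    rw [List.eraseIdx_eq_take_drop_succ,
      List.take_append_of_le_length (by rw [List.length_take]; omega), List.take_take,
      min_eq_left ht]
  -- part 1
  have part1 : ∀ t ≤ j,
      pickedSeq rpt' ((π.eraseIdx j).take t) = pickedSeq rpt (π.take t) := by
    intro t ht
    rw [htake_eq t ht]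
    apply pickedSeq_congr
    intro a ha
    obtain ⟨s, hs, hsa⟩ := List.getElem_of_mem ha
    have hslen : s < π.length := by
      rw [List.length_take] at hs; omega
    have hst : s < t := by
      rw [List.length_take] at hs; omega
    rw [List.getElem_take] at hsa
    have hne : a ≠ a₁ := by
      intro h
      exact hjfirst s (by omega) (by rw [List.getElem?_eq_getElem hslen, hsa, h])
    rw [hrpt, hrpt', Function.update_of_ne hne, Function.update_of_ne hne]
  refine ⟨part1, ?_⟩
  -- invariant for t ≥ j
  have hmain : ∀ t, j ≤ t → t ≤ m - 1 →
      pickedSeq rpt' ((π.eraseIdx j).take t) ⊆ pickedSeq rpt (π.take (t + 1)) ∧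
      (pickedSeq rpt (π.take (t + 1))).card ≤ (pickedSeq rpt' ((π.eraseIdx j).take t)).card + 1 ∧
      y₁ ∈ pickedSeq rpt (π.take (t + 1)) := by
    intro t ht
    induction t, ht using Nat.le_induction with
    | base =>
        intro _
        rw [part1 j le_rfl]
        have hdecomp := pickedSeq_take_succ rpt π j hjlen
        refine ⟨?_, ?_, hy₁⟩
        · rw [hdecomp]; exact subset_pickStep _ _
        · rw [hdecomp]; exact card_pickStep_le _ _
    | succ t ht ih =>
        intro hle
        have ihh := ih (by omega)
        have hm1 : 1 ≤ m := by omega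
        have htm : t + 1 < π.length := by omega
        have hlen' : (π.eraseIdx j).length = m - 1 := by
          rw [List.length_eraseIdx, if_pos hjlen, hπ]
        have ht' : t < (π.eraseIdx j).length := by omega
        have hget : (π.eraseIdx j)[t] = π[t + 1] := by
          rw [List.getElem_eraseIdx, dif_neg (by omega)]
        rw [pickedSeq_take_succ rpt' (π.eraseIdx j) t ht',
          pickedSeq_take_succ rpt π (t + 1) htm, hget]
        obtain ⟨h1, h2, h3⟩ := ihh
        obtain ⟨hsub, hcard⟩ := step_lemma (rpt π[t + 1]) (rpt' π[t + 1]) y₁ _ _ h1 h2 h3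
          (hcomp π[t + 1])
        exact ⟨hsub, hcard, subset_pickStep _ _ h3⟩
  intro t ht1 ht2
  exact (hmain t (by omega) ht2).1
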